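/- arXiv:1206.4790 — 6 statements merged into one kernel-verified Lean document; each statement's English description precedes it below -/
import Mathlib

section
/- Let π be a group and Z a central subgroup of π that is free abelian of finite rank k. Suppose there exists a finite-index subgroup π′ of π with Z ≤ π′ together with a group homomorphism r : π′ → Z whose restriction to Z is the identity (i.e. Z is a retract of π′). Then the composite of the inclusion Z → π with the natural map π → π^ab to the abelianization is injective. -/
/-!
Transfer from `π` to the finite-index subgroup `π'`, followed by the retraction `r`, is a
homomorphism `π → Z` into an abelian group, so it factors through `π^ab`. On a central element
`z` the transfer is `z ^ [π : π']`, and `r` fixes it, so the composite `Z → π^ab → Z` is the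
power map `z ↦ z ^ [π : π']`, which is injective because `Z ≅ ℤ^k` is torsion-free.
-/

open Subgroup

namespace MonoidHom

variable {G A : Type*} [Group G] [CommGroup A] {H Z : Subgroup G} [H.FiniteIndex]

lemma transfer_comp_retract_apply (hZ : Z ≤ center G) (hZH : Z ≤ H) (r : H →* Z)
    (hr : ∀ z : Z, r (inclusion hZH z) = z) (φ : Z →* A) (z : Z) :
    (φ.comp r).transfer z = φ z ^ H.index := by
  have conj_pow (k : ℕ) (g : G) (_ : g⁻¹ * (z : G) ^ k * g ∈ H) :
      g⁻¹ * (z : G) ^ k * g = (z : G) ^ k := by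
    rw [mul_assoc, ← (mem_center_iff.mp (pow_mem (hZ z.2) k) g), inv_mul_cancel_left]
  rw [transfer_eq_pow _ _ conj_pow, ← map_pow, ← hr (z ^ H.index)]
  rfl

end MonoidHom

/-- Let `π` be a group and `Z` a central subgroup of `π` that is free abelian
of finite rank `k`.  Suppose there is a finite-index subgroup `π'` of `π` with `Z ≤ π'`
together with a homomorphism `r : π' → Z` restricting to the identity on `Z`
(i.e. `Z` is a retract of `π'`).  Then the composite `Z → π → π^ab` of the inclusion with
the natural map to the abelianization is injective. -/
theorem homologically_injective_of_retract
    {π : Type*} [Group π] (k : ℕ) (Z : Subgroup π)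
    (hZcentral : Z ≤ Subgroup.center π)
    (hZfree : Nonempty (Z ≃* Multiplicative (Fin k → ℤ)))
    (π' : Subgroup π) (hfi : π'.FiniteIndex) (hZπ' : Z ≤ π')
    (r : π' →* Z)
    (hr : ∀ (z : π) (hz : z ∈ Z), r ⟨z, hZπ' hz⟩ = ⟨z, hz⟩) :
    Function.Injective (fun z : Z => Abelianization.of (z : π)) := by
  obtain ⟨e⟩ := hZfree
  let T : Abelianization π →* Multiplicative (Fin k → ℤ) :=
    Abelianization.lift ((e.toMonoidHom.comp r).transfer)
  have hT (z : Z) : T (Abelianization.of (z : π)) = e z ^ π'.index :=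
    (Abelianization.lift_apply_of _ _).trans
      (MonoidHom.transfer_comp_retract_apply hZcentral hZπ' r (fun z => hr z z.2) _ z)
  intro z₁ z₂ h
  have hpow : e z₁ ^ π'.index = e z₂ ^ π'.index := by
    rw [← hT, ← hT]
    exact congrArg T h
  exact e.injective (pow_left_injective hfi.index_ne_zero hpow)
end

section
/- Let π be a group whose abelianization π^ab is finitely generated, and let Z be a central subgroup of π that is free abelian of finite rank k such that the composite Z → π → π^ab is injective. Then there exist a finite-index normal subgroup π′ of π containing Z and a group homomorphism r : π′ → Z whose restriction to Z is the identity; consequently π′ is the internal direct product of Z and ker r, i.e. the central extension 1 → Z → π′ → π′/Z → 1 splits. -/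
/-! The image `B` of `Z` in the finitely generated abelian group `A = π^ab` is isomorphic to `Z`.
The torsion-free part `Q` of `A ⧸ B` is free, so the projection `p : A → Q` has a section `s`, and
`ρ = id - s ∘ p` fixes `B` pointwise and maps `A` into `ker p`, which contains `B` with finite
(torsion) quotient. Hence `ρ⁻¹(B)` has finite index in `A`, its preimage `π'` in `π` has finite
index, and `ρ` followed by `B ≃ Z` retracts `π'` onto `Z`. -/

theorem Submodule.exists_retraction_comap_finiteIndex {M : Type*} [AddCommGroup M]
    [Module.Finite ℤ M] (N : Submodule ℤ M) :
    ∃ ρ : M →ₗ[ℤ] M, (∀ x ∈ N, ρ x = x) ∧ (N.comap ρ).toAddSubgroup.FiniteIndex := by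
  let T := torsion ℤ (M ⧸ N)
  let p : M →ₗ[ℤ] (M ⧸ N) ⧸ T := T.mkQ ∘ₗ N.mkQ
  obtain ⟨s, hs⟩ := Module.projective_lifting_property p LinearMap.id
    (T.mkQ_surjective.comp N.mkQ_surjective)
  let ρ : M →ₗ[ℤ] M := LinearMap.id - s ∘ₗ p
  have hpρ : ∀ x, N.mkQ (ρ x) ∈ T := fun x => by
    rw [← T.ker_mkQ, LinearMap.mem_ker]
    change p (x - s (p x)) = 0
    rw [map_sub, ← LinearMap.comp_apply p s, hs, LinearMap.id_apply, sub_self]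
  refine ⟨ρ, fun x hx => ?_, ?_⟩
  · simp [ρ, p, (Submodule.Quotient.mk_eq_zero N).mpr hx]
  · have htors : Module.IsTorsion ℤ (M ⧸ N.comap ρ) := by
      intro y
      obtain ⟨x, rfl⟩ := (N.comap ρ).mkQ_surjective y
      obtain ⟨a, ha⟩ := hpρ x
      refine ⟨a, ?_⟩
      rw [Submonoid.smul_def] at ha ⊢
      rw [← map_smul, mkQ_apply, Quotient.mk_eq_zero, mem_comap, map_smul]
      rwa [← map_smul, mkQ_apply, Quotient.mk_eq_zero] at ha
    have : Finite (M ⧸ N.comap ρ) := Module.finite_of_fg_torsion _ htors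
    exact @AddSubgroup.finiteIndex_of_finite_quotient _ _ _ this

theorem CommGroup.exists_retraction_comap_finiteIndex {A : Type*} [CommGroup A] [Group.FG A]
    (H : Subgroup A) : ∃ ρ : A →* A, (∀ x ∈ H, ρ x = x) ∧ (H.comap ρ).FiniteIndex := by
  have : Module.Finite ℤ (Additive A) := Module.Finite.iff_addGroup_fg.mpr inferInstance
  obtain ⟨ρ, hρH, hρ⟩ := H.toAddSubgroup.toIntSubmodule.exists_retraction_comap_finiteIndex
  refine ⟨MonoidHom.toAdditive.symm ρ.toAddMonoidHom, fun x hx => hρH _ hx, ?_⟩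
  exact ⟨by rw [← Subgroup.index_toAddSubgroup]; exact hρ.index_ne_zero⟩

theorem MonoidHom.range_inf_ker_eq_bot {G H : Type*} [Group G] [Group H] {s : H →* G}
    {r : G →* H} (h : Function.LeftInverse r s) : s.range ⊓ r.ker = ⊥ := by
  refine eq_bot_iff.mpr fun g hg => ?_
  obtain ⟨⟨x, rfl⟩, hx⟩ := Subgroup.mem_inf.mp hg
  rw [mem_ker, h] at hx
  rw [hx, map_one]
  exact one_mem _

theorem MonoidHom.range_sup_ker_eq_top {G H : Type*} [Group G] [Group H] {s : H →* G}
    {r : G →* H} (h : Function.LeftInverse r s) : s.range ⊔ r.ker = ⊤ := by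
  refine eq_top_iff.mpr fun g _ => ?_
  have hker : (s (r g))⁻¹ * g ∈ r.ker := by rw [mem_ker, map_mul, map_inv, h, inv_mul_cancel]
  simpa using Subgroup.mul_mem_sup (s.mem_range.mpr ⟨r g, rfl⟩) hker

theorem splits_of_homologically_injective_general
    {π : Type*} [Group π] (Z : Subgroup π)
    (hfg : Group.FG (Abelianization π))
    (hinj : Function.Injective (fun z : Z => Abelianization.of (z : π))) :
    ∃ π' : Subgroup π, π'.Normal ∧ π'.FiniteIndex ∧ ∃ hZπ' : Z ≤ π',
      ∃ r : π' →* Z,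
        (∀ (z : π) (hz : z ∈ Z), r ⟨z, hZπ' hz⟩ = ⟨z, hz⟩) ∧
        Z.subgroupOf π' ⊓ r.ker = ⊥ ∧ Z.subgroupOf π' ⊔ r.ker = ⊤ := by
  let H := Z.map Abelianization.of
  let e : Z ≃* H := MulEquiv.ofBijective (Abelianization.of.subgroupMap Z)
    ⟨fun _ _ h => hinj (congrArg Subtype.val h), Abelianization.of.subgroupMap_surjective Z⟩
  obtain ⟨ρ, hρH, hρ⟩ := CommGroup.exists_retraction_comap_finiteIndex H
  have hZπ' : Z ≤ (H.comap ρ).comap Abelianization.of := fun z hz => by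
    have hzH : Abelianization.of z ∈ H := Subgroup.mem_map_of_mem _ hz
    rwa [Subgroup.mem_comap, Subgroup.mem_comap, hρH _ hzH]
  let r := e.symm.toMonoidHom.comp
    ((ρ.subgroupComap H).comp (Abelianization.of.subgroupComap (H.comap ρ)))
  have hr (z : π) (hz : z ∈ Z) : r ⟨z, hZπ' hz⟩ = ⟨z, hz⟩ := by
    change e.symm _ = _
    rw [MulEquiv.symm_apply_eq]
    exact Subtype.ext (hρH _ (Subgroup.mem_map_of_mem _ hz))
  have hsection : Function.LeftInverse r (Subgroup.inclusion hZπ') := fun z => hr z z.2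
  refine ⟨_, Subgroup.Normal.comap inferInstance _, ⟨?_⟩, hZπ', r, hr, ?_, ?_⟩
  · rw [Subgroup.index_comap_of_surjective _ QuotientGroup.mk_surjective]
    exact hρ.index_ne_zero
  · rw [← Subgroup.inclusion_range hZπ']
    exact MonoidHom.range_inf_ker_eq_bot hsection
  · rw [← Subgroup.inclusion_range hZπ']
    exact MonoidHom.range_sup_ker_eq_top hsection

/-- Let `π` be a group with finitely generated abelianization and let `Z` be a
central subgroup of `π`, free abelian of finite rank `k`, such that the composite
`Z → π → π^ab` is injective.  Then there exist a finite-index normal subgroup `π'` of `π`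
containing `Z` and a homomorphism `r : π' → Z` restricting to the identity on `Z`;
consequently `π'` is the internal direct product of `Z` and `ker r`, i.e. the central
extension `1 → Z → π' → π'/Z → 1` splits. -/
theorem splits_of_homologically_injective
    {π : Type*} [Group π] (k : ℕ) (Z : Subgroup π)
    (hZcentral : Z ≤ Subgroup.center π)
    (hZfree : Nonempty (Z ≃* Multiplicative (Fin k → ℤ)))
    (hfg : Group.FG (Abelianization π))
    (hinj : Function.Injective (fun z : Z => Abelianization.of (z : π))) :
    ∃ π' : Subgroup π, π'.Normal ∧ π'.FiniteIndex ∧ ∃ hZπ' : Z ≤ π',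
      ∃ r : π' →* Z,
        (∀ (z : π) (hz : z ∈ Z), r ⟨z, hZπ' hz⟩ = ⟨z, hz⟩) ∧
        Z.subgroupOf π' ⊓ r.ker = ⊥ ∧ Z.subgroupOf π' ⊔ r.ker = ⊤ :=
  splits_of_homologically_injective_general Z hfg hinj
end

section
/- Let π be a group containing a normal subgroup A of finite index that is free abelian of finite rank n, and let B be a subgroup of the center of π with B ≤ A. Then there exists a finite-index normal subgroup π′ of π with B ≤ π′ together with a group homomorphism r : π′ → B whose restriction to B is the identity; equivalently, the central extension 1 → B → π′ → π′/B → 1 splits. -/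
/-!
By Smith normal form, a subgroup `N` of `ℤⁿ` has a basis `a₁e₁, …, aₛeₛ` for some basis `e` of
`ℤⁿ` and nonzero integers `aᵢ`. The vectors whose `eᵢ`-coordinates are divisible by `aᵢ` form a
subgroup of finite index containing `N`, and dividing those coordinates by `aᵢ` retracts it onto
`N`. Transported to `π`, this makes `B` a retract of a finite-index subgroup `K ≤ A`, which has
finite index in `π` too. Being central, `B` is normal, so it lies in the normal core of `K`; the
core is normal of finite index, and the retraction restricts to it.
-/

open Function

namespace Subgroup

variable {G G' : Type*} [Group G] [Group G']

@[to_additive]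
def IsRetract (H K : Subgroup G) : Prop :=
  ∃ hHK : H ≤ K, ∃ r : K →* H, ∀ x : H, r (inclusion hHK x) = x

@[to_additive]
def IsVirtualRetract (H : Subgroup G) : Prop :=
  ∃ K : Subgroup G, K.FiniteIndex ∧ H.IsRetract K

theorem normal_of_le_center {H : Subgroup G} (hH : H ≤ center G) : H.Normal where
  conj_mem x hx g := by rwa [mem_center_iff.mp (hH hx) g, mul_inv_cancel_right]

theorem IsRetract.mono {H K L : Subgroup G} (h : H.IsRetract K) (hHL : H ≤ L) (hLK : L ≤ K) :
    H.IsRetract L := by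
  obtain ⟨_, r, hr⟩ := h
  exact ⟨hHL, r.comp (inclusion hLK), hr⟩

theorem IsRetract.map_of_injective {H K : Subgroup G} (h : H.IsRetract K) {f : G →* G'}
    (hf : Injective f) : (H.map f).IsRetract (K.map f) := by
  obtain ⟨hHK, r, hr⟩ := h
  let eH := equivMapOfInjective H f hf
  let eK := equivMapOfInjective K f hf
  refine ⟨map_mono hHK, eH.toMonoidHom.comp (r.comp eK.symm.toMonoidHom), fun x => ?_⟩
  obtain ⟨y, rfl⟩ := eH.surjective x
  have hy : eK.symm (inclusion (map_mono hHK) (eH y)) = inclusion hHK y := by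
    rw [MulEquiv.symm_apply_eq]; rfl
  simp [hy, hr]

theorem IsVirtualRetract.map_of_injective {H : Subgroup G} (h : H.IsVirtualRetract)
    {f : G →* G'} (hf : Injective f) (hfi : f.range.FiniteIndex) :
    (H.map f).IsVirtualRetract := by
  obtain ⟨K, hK, hHK⟩ := h
  refine ⟨K.map f, ⟨?_⟩, hHK.map_of_injective hf⟩
  rw [K.index_map_of_injective hf]
  exact mul_ne_zero hK.index_ne_zero hfi.index_ne_zero

theorem IsVirtualRetract.exists_normal {H : Subgroup G} [H.Normal] (h : H.IsVirtualRetract) :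
    ∃ K : Subgroup G, K.Normal ∧ K.FiniteIndex ∧ H.IsRetract K := by
  obtain ⟨K, hK, hHK⟩ := h
  exact ⟨K.normalCore, inferInstance, inferInstance,
    hHK.mono (normal_le_normalCore.mpr hHK.1) (normalCore_le K)⟩

end Subgroup

theorem AddSubgroup.IsVirtualRetract.toSubgroup {A : Type*} [AddGroup A] {N : AddSubgroup A}
    (h : N.IsVirtualRetract) : (AddSubgroup.toSubgroup N).IsVirtualRetract := by
  obtain ⟨K, hK, hNK, r, hr⟩ := h
  refine ⟨AddSubgroup.toSubgroup K, ⟨hK.index_ne_zero⟩, hNK, ?_, fun x => Subtype.ext ?_⟩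
  · exact
      { toFun x := ⟨.ofAdd (r ⟨x.1.toAdd, x.2⟩), (r _).2⟩
        map_one' := Subtype.ext (congrArg Subtype.val (map_zero r))
        map_mul' x y := Subtype.ext <| congrArg Subtype.val <|
          map_add r ⟨x.1.toAdd, x.2⟩ ⟨y.1.toAdd, y.2⟩ }
  · exact congrArg Subtype.val (hr ⟨x.1.toAdd, x.2⟩)

theorem Module.Basis.SmithNormalForm.isVirtualRetract {M ι : Type*} [AddCommGroup M]
    {N : Submodule ℤ M} {s : ℕ} (snf : Basis.SmithNormalForm N ι s) :
    N.toAddSubgroup.IsVirtualRetract := by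
  have ha (i : Fin s) : snf.a i ≠ 0 := fun h =>
    snf.bN.ne_zero i (Subtype.ext (by simp [snf.snf, h]))
  have (i : Fin s) : NeZero (snf.a i).natAbs := ⟨Int.natAbs_ne_zero.mpr (ha i)⟩
  let c (i : Fin s) : M →+ ℤ := (snf.bM.coord (snf.f i)).toAddMonoidHom
  have hcN (x : N) (i : Fin s) : c i x = snf.a i * snf.bN.repr x i := by simp [c]
  let K := (AddMonoidHom.pi fun i => (Int.castAddHom (ZMod (snf.a i).natAbs)).comp (c i)).ker
  have hK {m : M} : m ∈ K ↔ ∀ i, snf.a i ∣ c i m := by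
    simp only [K, AddMonoidHom.mem_ker, funext_iff, AddMonoidHom.pi_apply, AddMonoidHom.comp_apply]
    simp [ZMod.intCast_zmod_eq_zero_iff_dvd]
  let d : K →+ (Fin s → ℤ) :=
    { toFun m i := c i m / snf.a i
      map_zero' := by ext; simp
      map_add' m m' := by ext i; simp [Int.add_ediv_of_dvd_left (hK.1 m.2 i)] }
  have hNK : N.toAddSubgroup ≤ K := fun x hx => hK.2 fun i => ⟨_, hcN ⟨x, hx⟩ i⟩
  refine ⟨K, inferInstance, hNK, snf.bN.equivFun.symm.toAddMonoidHom.comp d, fun x => ?_⟩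
  have hdN : d (AddSubgroup.inclusion hNK x) = snf.bN.equivFun x := by ext i; simp [d, hcN, ha]
  exact congrArg snf.bN.equivFun.symm hdN |>.trans (snf.bN.equivFun.symm_apply_apply x)

theorem AddSubgroup.isVirtualRetract_of_free {M : Type*} [AddCommGroup M] [Module.Free ℤ M]
    [Module.Finite ℤ M] (N : AddSubgroup M) : N.IsVirtualRetract :=
  (N.toIntSubmodule.smithNormalForm (Module.Free.chooseBasis ℤ M)).2.isVirtualRetract

theorem Subgroup.isVirtualRetract_of_free {M : Type*} [AddCommGroup M] [Module.Free ℤ M]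
    [Module.Finite ℤ M] (H : Subgroup (Multiplicative M)) : H.IsVirtualRetract := by
  simpa using (AddSubgroup.isVirtualRetract_of_free (toAddSubgroup' H)).toSubgroup

theorem central_subgroup_of_crystallographic_retract_general
    {π : Type*} [Group π] (n : ℕ) (A : Subgroup π)
    (hAfi : A.FiniteIndex)
    (hAfree : Nonempty (A ≃* Multiplicative (Fin n → ℤ)))
    (B : Subgroup π) (hBcentral : B ≤ Subgroup.center π) (hBA : B ≤ A) :
    ∃ π' : Subgroup π, π'.Normal ∧ π'.FiniteIndex ∧ ∃ hBπ' : B ≤ π',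
      ∃ r : π' →* B, ∀ (x : π) (hx : x ∈ B), r ⟨x, hBπ' hx⟩ = ⟨x, hx⟩ := by
  obtain ⟨e⟩ := hAfree
  have hBe : ((B.subgroupOf A).comap e.symm.toMonoidHom).IsVirtualRetract :=
    Subgroup.isVirtualRetract_of_free _
  have hBA' : (B.subgroupOf A).IsVirtualRetract := by
    have h := hBe.map_of_injective (f := e.symm.toMonoidHom) e.symm.injective
      (by rw [MonoidHom.range_eq_top.mpr e.symm.surjective]; infer_instance)
    rwa [Subgroup.map_comap_eq_self_of_surjective (f := e.symm.toMonoidHom) e.symm.surjective] at h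
  have hB : B.IsVirtualRetract := by
    simpa [Subgroup.subgroupOf_map_subtype, inf_of_le_left hBA] using
      hBA'.map_of_injective A.subtype_injective (by rwa [A.range_subtype])
  have := Subgroup.normal_of_le_center hBcentral
  obtain ⟨K, hKn, hKfi, hBK, r, hr⟩ := hB.exists_normal
  exact ⟨K, hKn, hKfi, hBK, r, fun x hx => hr ⟨x, hx⟩⟩

/-- Let `π` be a group containing a normal subgroup `A` of finite index which
is free abelian of finite rank `n`, and let `B` be a subgroup of the center of `π` with
`B ≤ A`.  Then there exists a finite-index normal subgroup `π'` of `π` with `B ≤ π'`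
together with a homomorphism `r : π' → B` restricting to the identity on `B`; equivalently,
the central extension `1 → B → π' → π'/B → 1` splits. -/
theorem central_subgroup_of_crystallographic_retract
    {π : Type*} [Group π] (n : ℕ) (A : Subgroup π)
    (hAnormal : A.Normal) (hAfi : A.FiniteIndex)
    (hAfree : Nonempty (A ≃* Multiplicative (Fin n → ℤ)))
    (B : Subgroup π) (hBcentral : B ≤ Subgroup.center π) (hBA : B ≤ A) :
    ∃ π' : Subgroup π, π'.Normal ∧ π'.FiniteIndex ∧ ∃ hBπ' : B ≤ π',
      ∃ r : π' →* B, ∀ (x : π) (hx : x ∈ B), r ⟨x, hBπ' hx⟩ = ⟨x, hx⟩ :=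
  central_subgroup_of_crystallographic_retract_general n A hAfi hAfree B hBcentral hBA
end

section
/- Let π be a group containing a normal subgroup A of finite index that is free abelian of finite rank, and let B be a subgroup of the center of π with B ≤ A. Then the composite of the inclusion B → π with the natural map π → π^ab to the abelianization is injective. -/
/-!
The transfer `π → A` to an abelian subgroup `A` of finite index factors through `π^ab`, and on a
central element `b ∈ A` it is `b ↦ b ^ [π : A]`. Since `A ≅ ℤⁿ` is torsion-free, raising to the
power `[π : A]` is injective on `A`; so the transfer, and with it `B → π^ab`, is injective on `B`.
-/

open Subgroup

theorem MonoidHom.transfer_eq_pow_of_mem_center {G M : Type*} [Group G] [CommGroup M]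
    {H : Subgroup G} [H.FiniteIndex] (ϕ : H →* M) {g : G} (hg_center : g ∈ center G)
    (hg : g ∈ H) : ϕ.transfer g = ϕ ⟨g, hg⟩ ^ H.index := by
  have hconj (k : ℕ) (x : G) : x⁻¹ * g ^ k * x = g ^ k := by
    rw [mem_center_iff.mp (pow_mem hg_center k) x⁻¹, inv_mul_cancel_right]
  rw [ϕ.transfer_eq_pow g fun k x _ => hconj k x, ← map_pow]
  rfl

theorem Subgroup.injective_abelianizationOf_of_le_center {G M : Type*} [Group G] [CommGroup M]
    [IsMulTorsionFree M] {H B : Subgroup G} [H.FiniteIndex] (ϕ : H →* M)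
    (hϕ : Function.Injective ϕ) (hB_center : B ≤ center G) (hBH : B ≤ H) :
    Function.Injective fun b : B => Abelianization.of (b : G) := by
  refine Function.Injective.of_comp (f := Abelianization.lift ϕ.transfer) ?_
  have hcomp : (Abelianization.lift ϕ.transfer ∘ fun b : B => Abelianization.of (b : G)) =
      fun b : B => ϕ ⟨b, hBH b.2⟩ ^ H.index := by
    funext b
    simp only [Function.comp_apply, Abelianization.lift_apply_of]
    exact ϕ.transfer_eq_pow_of_mem_center (hB_center b.2) (hBH b.2)
  rw [hcomp]
  intro b b' h
  have hA : (⟨b, hBH b.2⟩ : H) = ⟨b', hBH b'.2⟩ :=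
    hϕ (pow_left_injective FiniteIndex.index_ne_zero h)
  exact Subtype.ext (Subtype.mk_eq_mk.mp hA)

theorem central_subgroup_of_crystallographic_homologically_injective_general
    {π : Type*} [Group π] (n : ℕ) (A : Subgroup π)
    (hAfi : A.FiniteIndex)
    (hAfree : Nonempty (A ≃* Multiplicative (Fin n → ℤ)))
    (B : Subgroup π) (hBcentral : B ≤ Subgroup.center π) (hBA : B ≤ A) :
    Function.Injective (fun b : B => Abelianization.of (b : π)) := by
  obtain ⟨e⟩ := hAfree
  exact injective_abelianizationOf_of_le_center e.toMonoidHom e.injective hBcentral hBA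

/-- Let `π` be a group containing a normal subgroup `A` of finite index which
is free abelian of finite rank, and let `B` be a subgroup of the center of `π` with `B ≤ A`.
Then the composite of the inclusion `B → π` with the natural map `π → π^ab` to the
abelianization is injective. -/
theorem central_subgroup_of_crystallographic_homologically_injective
    {π : Type*} [Group π] (n : ℕ) (A : Subgroup π)
    (hAnormal : A.Normal) (hAfi : A.FiniteIndex)
    (hAfree : Nonempty (A ≃* Multiplicative (Fin n → ℤ)))
    (B : Subgroup π) (hBcentral : B ≤ Subgroup.center π) (hBA : B ≤ A) :
    Function.Injective (fun b : B => Abelianization.of (b : π)) :=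
  central_subgroup_of_crystallographic_homologically_injective_general n A hAfi hAfree B hBcentral
    hBA
end

section
/- Let π be a torsion-free group containing a normal subgroup A of finite index that is free abelian of finite rank n and equals its own centralizer in π. Then the center Z(π) of π is a finitely generated free abelian group, the composite Z(π) → π → π^ab is injective, and the rank of Z(π) equals the free rank of the abelianization π^ab, i.e. rank Z(π) = dim_ℚ(π^ab ⊗ ℚ). -/
open scoped TensorProduct

/-- A monoid is torsion-free if its only element of finite order is the identity
(the meaning of `Monoid.IsTorsionFree` in the older Mathlib). -/
def Monoid.IsTorsionFree (G : Type*) [Monoid G] : Prop :=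
  ∀ g : G, g ≠ 1 → ¬IsOfFinOrder g

/-!
The hypothesis `C_π(A) = A` puts `Z(π)` inside `A ≅ ℤⁿ`, so `Z(π)` is free abelian of finite
rank. If `z ∈ Z(π)` dies in `π^ab`, the transfer `π → A` (which factors through `π^ab`) sends `z`
to `z ^ [π : A]`, so `z` has finite order and `z = 1`. Conversely, for `g ∈ π` the element
`a = g ^ [π : A]` lies in `A`, and its norm `∏_{hA ∈ π/A} h a h⁻¹` is central with image
`g ^ ([π : A]²)` in `π^ab`. Hence `Z(π) → π^ab` is injective with torsion cokernel, and the two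
groups have the same rank.
-/

open scoped IsMulCommutative

open Subgroup

section

variable {G : Type*} [Group G]

def quotientConjNormal (A : Subgroup G) [A.Normal] [IsMulCommutative A] : G ⧸ A →* MulAut A :=
  QuotientGroup.lift A MulAut.conjNormal fun a ha =>
    MonoidHom.mem_ker.2 <| MulEquiv.ext fun b => Subtype.ext <| by
      simp [MulAut.conjNormal_apply, setLike_mul_comm ha b.2]

theorem quotientConjNormal_mk (A : Subgroup G) [A.Normal] [IsMulCommutative A] (g : G) :
    quotientConjNormal A (g : G ⧸ A) = MulAut.conjNormal g :=
  QuotientGroup.lift_mk _ _ g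

section ConjNorm

variable (A : Subgroup G) [A.Normal] [IsMulCommutative A] [Fintype (G ⧸ A)]

def conjNorm (a : A) : A := ∏ q : G ⧸ A, quotientConjNormal A q a

theorem conjNorm_mem_center (a : A) : (conjNorm A a : G) ∈ center G := by
  refine mem_center_iff.2 fun g => mul_inv_eq_iff_eq_mul.1 ?_
  have : MulAut.conjNormal g (conjNorm A a) = conjNorm A a := by
    rw [conjNorm, map_prod, ← quotientConjNormal_mk]
    exact Fintype.prod_equiv (Equiv.mulLeft (g : G ⧸ A)) _ _ fun q => by simp
  rw [← MulAut.conjNormal_apply, this]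

theorem abelianization_of_conjNorm (a : A) :
    Abelianization.of (conjNorm A a : G) = Abelianization.of (a : G) ^ A.index := by
  have hconj (q : G ⧸ A) :
      Abelianization.of.comp A.subtype (quotientConjNormal A q a) = Abelianization.of (a : G) := by
    induction q using QuotientGroup.induction_on with
    | H g => simp [quotientConjNormal_mk, MulAut.conjNormal_apply]
  calc Abelianization.of (conjNorm A a : G)
      = ∏ q : G ⧸ A, Abelianization.of.comp A.subtype (quotientConjNormal A q a) :=
        map_prod (Abelianization.of.comp A.subtype) _ _
    _ = Abelianization.of (a : G) ^ A.index := by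
        rw [Fintype.prod_congr _ _ hconj, Finset.prod_const, Finset.card_univ, index_eq_card,
          Nat.card_eq_fintype_card]

end ConjNorm

variable (G) in
def centerToAbelianization : center G →* Abelianization G :=
  Abelianization.of.comp (center G).subtype

theorem pow_index_eq_one_of_centerToAbelianization_eq_one (H : Subgroup G) [IsMulCommutative H]
    [H.FiniteIndex] {z : center G} (hz : centerToAbelianization G z = 1) :
    (z : G) ^ H.index = 1 := by
  have hV := MonoidHom.transfer_eq_pow (MonoidHom.id H) (z : G) fun k g _ => by
    rw [mul_assoc, ← mem_center_iff.1 (pow_mem z.2 k) g, inv_mul_cancel_left]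
  have hz' : Abelianization.of (z : G) = 1 := hz
  rw [← Abelianization.lift_apply_of, hz', map_one] at hV
  exact congrArg Subtype.val hV.symm

theorem centerToAbelianization_injective (htf : Monoid.IsTorsionFree G) (H : Subgroup G)
    [IsMulCommutative H] [H.FiniteIndex] : Function.Injective (centerToAbelianization G) :=
  (injective_iff_map_eq_one _).2 fun z hz => by
    by_contra hne
    refine htf z (by simpa using hne) (isOfFinOrder_iff_pow_eq_one.2 ⟨H.index, ?_, ?_⟩)
    · exact Nat.pos_of_ne_zero FiniteIndex.index_ne_zero
    · exact pow_index_eq_one_of_centerToAbelianization_eq_one H hz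

theorem pow_index_sq_mem_range_centerToAbelianization (A : Subgroup G) [A.Normal]
    [IsMulCommutative A] [A.FiniteIndex] (x : Abelianization G) :
    x ^ (A.index ^ 2) ∈ (centerToAbelianization G).range := by
  let := A.fintypeQuotientOfFiniteIndex
  obtain ⟨g, rfl⟩ := QuotientGroup.mk_surjective x
  change Abelianization.of g ^ _ ∈ _
  refine ⟨⟨_, conjNorm_mem_center A ⟨g ^ A.index, pow_index_mem A g⟩⟩, ?_⟩
  simp [centerToAbelianization, abelianization_of_conjNorm, ← pow_mul, sq]

end

theorem finrank_eq_of_injective_of_smul_mem_range {R M N : Type*} [CommRing R] [IsDomain R]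
    [AddCommGroup M] [Module R M] [AddCommGroup N] [Module R N] (f : M →ₗ[R] N)
    (hf : Function.Injective f)
    (hcoker : ∀ y, ∃ a : R, a ≠ 0 ∧ a • y ∈ LinearMap.range f) :
    Module.finrank R M = Module.finrank R N := by
  have hquot : Module.rank R (N ⧸ LinearMap.range f) = 0 := rank_eq_zero_iff.2 fun y => by
    obtain ⟨y, rfl⟩ := Submodule.Quotient.mk_surjective _ y
    obtain ⟨a, ha, hy⟩ := hcoker y
    exact ⟨a, ha, (Submodule.Quotient.mk_eq_zero _).2 hy⟩
  have hrank : Module.rank R (LinearMap.range f) = Module.rank R N := by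
    rw [← rank_quotient_add_rank_of_isDomain (LinearMap.range f), hquot, zero_add]
  rw [← LinearMap.finrank_range_of_inj hf, Module.finrank, hrank, Module.finrank]

theorem nonempty_mulEquiv_multiplicative_fin_finrank {H : Type*} [CommGroup H] {n : ℕ}
    (f : H →* Multiplicative (Fin n → ℤ)) (hf : Function.Injective f) :
    Nonempty (H ≃* Multiplicative (Fin (Module.finrank ℤ (Additive H)) → ℤ)) := by
  let e := LinearEquiv.ofInjective (MonoidHom.toAdditiveLeft f).toIntLinearMap hf
  have : Module.Free ℤ (Additive H) := Module.Free.of_equiv e.symm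
  have : Module.Finite ℤ (Additive H) := Module.Finite.equiv e.symm
  exact ⟨AddEquiv.toMultiplicativeRight (Module.finBasis ℤ (Additive H)).equivFun.toAddEquiv⟩

/-- **Theorem 3.2 / Theorem E, algebraic form.** Let `π` be a torsion-free
group containing a normal finite-index subgroup `A` which is free abelian of finite rank `n`
and equals its own centralizer in `π`.  Then the center `Z(π)` is a finitely generated free
abelian group, the composite `Z(π) → π → π^ab` is injective, and the rank of `Z(π)` equals
the free rank of the abelianization, i.e. `rank Z(π) = dim_ℚ (π^ab ⊗ ℚ)`. -/
theorem center_rank_eq_first_betti_number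
    {π : Type*} [Group π] (n : ℕ)
    (htf : Monoid.IsTorsionFree π)
    (A : Subgroup π) (hAnormal : A.Normal) (hAfi : A.FiniteIndex)
    (hAfree : Nonempty (A ≃* Multiplicative (Fin n → ℤ)))
    (hAmax : Subgroup.centralizer (A : Set π) = A) :
    ∃ m : ℕ,
      Nonempty (Subgroup.center π ≃* Multiplicative (Fin m → ℤ)) ∧
      Function.Injective (fun z : Subgroup.center π => Abelianization.of (z : π)) ∧
      m = Module.finrank ℚ (ℚ ⊗[ℤ] Additive (Abelianization π)) := by
  obtain ⟨e⟩ := hAfree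
  have : IsMulCommutative A := e.symm.surjective.mul_comm (f := e.symm.toMulHom) inferInstance
  have hZA : center π ≤ A := hAmax ▸ center_le_centralizer (A : Set π)
  have hinj := centerToAbelianization_injective htf A
  refine ⟨_, nonempty_mulEquiv_multiplicative_fin_finrank (e.toMonoidHom.comp (inclusion hZA))
    (e.injective.comp (inclusion_injective hZA)), hinj, ?_⟩
  rw [(TensorProduct.isBaseChange ℤ _ ℚ).finrank_eq]
  refine finrank_eq_of_injective_of_smul_mem_range
    (MonoidHom.toAdditive (centerToAbelianization π)).toIntLinearMap hinj fun y => ?_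
  refine ⟨(A.index ^ 2 : ℕ), Nat.cast_ne_zero.2 (pow_ne_zero 2 hAfi.index_ne_zero), ?_⟩
  obtain ⟨z, hz⟩ := pow_index_sq_mem_range_centerToAbelianization A y.toMul
  exact ⟨Additive.ofMul z, by rw [natCast_zsmul]; simp [hz]⟩
end

section
/- Let π be a group and Z a central subgroup of π that is free abelian of finite rank k, and put Q = π/Z. Assume the abelianization π^ab is finitely generated. Then the following are equivalent: (1) the composite Z → π → π^ab is injective; (2) there exists a finite-index normal subgroup Q′ of Q such that, for the preimage π′ of Q′ in π, the induced central extension 1 → Z → π′ → Q′ → 1 splits (i.e. Z has a complement in π′). -/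
/-!
(1) ⇒ (2): `Z` embeds in the finitely generated abelian group `π^ab`, and being torsion-free
also in the free group `π^ab / torsion`. A Smith normal form of its image there gives
`θ : π → ℤ^r` that is injective on `Z` with `θ(Z)` of full rank, hence of finite index. Then
`π' = θ⁻¹(θ Z) = Z ⊔ ker θ` has finite index and `ker θ` is a complement of `Z` in it.

(2) ⇒ (1): a complement of the central subgroup `Z` in `π'` yields a retraction `r : π' → Z`.
For central `z` the transfer of `r` is `z ↦ z ^ [π : π']`, and it factors through `π^ab`;
so if `z` dies in `π^ab` then `z ^ [π : π'] = 1`, and `z = 1` as `Z` is torsion-free.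
-/

theorem Subgroup.normal_of_le_center' {π : Type*} [Group π] (Z : Subgroup π)
    (hZ : Z ≤ Subgroup.center π) : Z.Normal :=
  ⟨fun z hz g => by
    have h := (Subgroup.mem_center_iff.mp (hZ hz)) g
    rw [h, mul_inv_cancel_right]
    exact hz⟩

open Module Subgroup

section SmithNormalForm

variable {R M : Type*} [CommRing R] [IsDomain R] [AddCommGroup M] [Module R M]

theorem Module.Basis.SmithNormalForm.injective_pi_coord_comp_subtype {ι : Type*}
    {N : Submodule R M} {n : ℕ} (snf : Basis.SmithNormalForm N ι n) :
    Function.Injective ((LinearMap.pi fun i => snf.bM.coord (snf.f i)) ∘ₗ N.subtype) := by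
  have ha (i : Fin n) : snf.a i ≠ 0 := by
    intro h
    apply snf.bN.ne_zero i
    exact Subtype.ext (by rw [snf.snf, h, zero_smul, Submodule.coe_zero])
  rw [← LinearMap.ker_eq_bot, LinearMap.ker_eq_bot']
  intro m hm
  refine snf.bN.repr.injective (Finsupp.ext fun i => ?_)
  have hi : snf.a i * snf.bN.repr m i = 0 := by
    have h := LinearMap.congr_fun (snf.coord_apply_embedding_eq_smul_coord (i := i)) m
    rw [LinearMap.smul_apply, Basis.coord_apply, smul_eq_mul] at h
    rw [← h]
    exact congrFun hm i
  simpa [ha i] using hi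

theorem Submodule.exists_linearMap_pi_injective_comp_subtype [IsPrincipalIdealRing R]
    [Module.Finite R M] (N : Submodule R M) (hN : N ⊓ torsion R M = ⊥) :
    ∃ χ : M →ₗ[R] (Fin (finrank R N) → R), Function.Injective (χ ∘ₗ N.subtype) := by
  set T := torsion R M
  have hNT : Function.Injective (T.mkQ ∘ₗ N.subtype) := by
    rw [← LinearMap.ker_eq_bot, LinearMap.ker_eq_bot']
    intro m hm
    have hmT : (m : M) ∈ N ⊓ T := ⟨m.2, (Submodule.Quotient.mk_eq_zero T).mp hm⟩
    rw [hN, Submodule.mem_bot] at hmT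
    exact Subtype.ext hmT
  obtain ⟨n, snf⟩ := (N.map T.mkQ).smithNormalForm (Free.chooseBasis R (M ⧸ T))
  have hn : n = finrank R N := by
    rw [← LinearMap.finrank_range_of_inj hNT, LinearMap.range_comp, range_subtype,
      finrank_eq_card_basis snf.bN, Fintype.card_fin]
  subst hn
  refine ⟨(LinearMap.pi fun i => snf.bM.coord (snf.f i)) ∘ₗ T.mkQ, ?_⟩
  intro x y hxy
  apply hNT
  have h := snf.injective_pi_coord_comp_subtype (a₁ := ⟨T.mkQ x, mem_map_of_mem x.2⟩)
    (a₂ := ⟨T.mkQ y, mem_map_of_mem y.2⟩) hxy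
  exact congrArg Subtype.val h

end SmithNormalForm

theorem CommGroup.exists_monoidHom_injective_comp_finiteIndex_range {A B : Type*} [CommGroup A]
    [Group.FG A] [Group B] [IsMulTorsionFree B] (ι : B →* A) (hι : Function.Injective ι) :
    ∃ (n : ℕ) (χ : A →* Multiplicative (Fin n → ℤ)),
      Function.Injective (χ.comp ι) ∧ (χ.comp ι).range.FiniteIndex := by
  let N : Submodule ℤ (Additive A) := AddSubgroup.toIntSubmodule (MonoidHom.toAdditive ι).range
  have hN : N ⊓ Submodule.torsion ℤ (Additive A) = ⊥ := by
    rw [eq_bot_iff]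
    rintro _ ⟨⟨b, rfl⟩, hb⟩
    obtain ⟨⟨a, ha₀⟩, ha⟩ := (Submodule.mem_torsion_iff _).mp hb
    have hba : b.toMul ^ a = 1 := by
      apply hι
      rw [map_zpow, map_one]
      exact congrArg Additive.toMul ha
    rw [IsMulTorsionFree.zpow_eq_one_iff_left (nonZeroDivisors.ne_zero ha₀)] at hba
    simp [hba]
  obtain ⟨χ, hχ⟩ := N.exists_linearMap_pi_injective_comp_subtype hN
  let χm : A →* Multiplicative (Fin (finrank ℤ N) → ℤ) :=
    AddMonoidHom.toMultiplicativeRight χ.toAddMonoidHom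
  refine ⟨finrank ℤ N, χm, fun b₁ b₂ h => ?_, ?_⟩
  · apply hι
    have := hχ (a₁ := ⟨Additive.ofMul (ι b₁), b₁, rfl⟩)
      (a₂ := ⟨Additive.ofMul (ι b₂), b₂, rfl⟩) h
    exact congrArg (Additive.toMul ∘ Subtype.val) this
  · have : Finite ((Fin (finrank ℤ N) → ℤ) ⧸ (χ ∘ₗ N.subtype).range.toAddSubgroup) :=
      Submodule.finiteQuotientOfFreeOfRankEq _
        (by rw [LinearMap.finrank_range_of_inj hχ, finrank_fin_fun])
    have hrange : (χm.comp ι).range =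
        AddSubgroup.toSubgroup (χ ∘ₗ N.subtype).range.toAddSubgroup := by
      ext x
      constructor
      · rintro ⟨b, rfl⟩
        exact ⟨⟨Additive.ofMul (ι b), b, rfl⟩, rfl⟩
      · rintro ⟨⟨_, b, rfl⟩, hx⟩
        exact ⟨b, hx⟩
    rw [hrange, AddSubgroup.finiteIndex_toSubgroup_iff]
    exact AddSubgroup.finiteIndex_of_finite_quotient

namespace Subgroup

variable {G : Type*} [Group G]

def HasComplementIn (Z H : Subgroup G) : Prop :=
  ∃ C : Subgroup G, C ≤ H ∧ Z ⊓ C = ⊥ ∧ Z ⊔ C = H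

theorem hasComplementIn_sup_ker {M : Type*} [Group M] (Z : Subgroup G) (θ : G →* M)
    (hθ : Function.Injective (θ.comp Z.subtype)) : Z.HasComplementIn (Z ⊔ θ.ker) := by
  refine ⟨θ.ker, le_sup_right, eq_bot_iff.mpr fun x ⟨hxZ, hxθ⟩ => ?_, rfl⟩
  have : (⟨x, hxZ⟩ : Z) = 1 := hθ (by simpa using hxθ)
  exact congrArg Subtype.val this

theorem exists_normal_finiteIndex_hasComplementIn_of_injective {M : Type*} [CommGroup M]
    (Z : Subgroup G) (θ : G →* M) (hθ : Function.Injective (θ.comp Z.subtype))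
    [hfin : (θ.comp Z.subtype).range.FiniteIndex] :
    ∃ H : Subgroup G, Z ≤ H ∧ H.Normal ∧ H.FiniteIndex ∧ Z.HasComplementIn H := by
  have hH : Z ⊔ θ.ker = (Z.map θ).comap θ := (comap_map_eq θ Z).symm
  rw [MonoidHom.range_comp, range_subtype] at hfin
  refine ⟨Z ⊔ θ.ker, le_sup_left, hH ▸ (normal_of_isMulCommutative _).comap θ, ⟨?_⟩,
    Z.hasComplementIn_sup_ker θ hθ⟩
  rw [hH, index_comap]
  exact (isFiniteRelIndex_of_finiteIndex).relIndex_ne_zero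

theorem HasComplementIn.exists_retraction {Z H : Subgroup G} (h : Z.HasComplementIn H)
    (hZ : Z ≤ center G) (hZH : Z ≤ H) :
    ∃ r : H →* Z, r.comp (inclusion hZH) = MonoidHom.id Z := by
  obtain ⟨C, -, hinf, rfl⟩ := h
  have hcomm (z : Z) (c : C) : Commute (Z.subtype z) (C.subtype c) :=
    ((mem_center_iff.mp (hZ z.2)) c).symm
  let m := Z.subtype.noncommCoprod C.subtype hcomm
  have hm : Function.Injective m := (MonoidHom.noncommCoprod_injective _ _ hcomm).mpr
    ⟨Z.subtype_injective, C.subtype_injective, by simpa [disjoint_iff] using hinf⟩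
  have hrange : m.range = Z ⊔ C := by
    rw [MonoidHom.noncommCoprod_range, range_subtype, range_subtype]
  let e : Z × C ≃* ↥(Z ⊔ C) :=
    (MonoidHom.ofInjective hm).trans (MulEquiv.subgroupCongr hrange)
  refine ⟨(MonoidHom.fst Z C).comp e.symm.toMonoidHom, MonoidHom.ext fun z => ?_⟩
  have hez : e (z, 1) = inclusion hZH z :=
    Subtype.ext (by simp [e, m, MonoidHom.ofInjective_apply])
  simp [← hez]

end Subgroup

theorem Abelianization.of_comp_subtype_injective {G A : Type*} [Group G] [CommGroup A]
    {Z H : Subgroup G} [IsMulTorsionFree Z] [H.FiniteIndex] (hZ : Z ≤ center G) (hZH : Z ≤ H)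
    (ϕ : H →* A) (hϕ : Function.Injective (ϕ.comp (inclusion hZH))) :
    Function.Injective (Abelianization.of.comp Z.subtype) := by
  rw [injective_iff_map_eq_one]
  intro z hz
  have hcentral (k : ℕ) (g : G) : g⁻¹ * (z : G) ^ k * g = (z : G) ^ k := by
    rw [mul_assoc, ← mem_center_iff.mp (pow_mem (hZ z.2) k) g, inv_mul_cancel_left]
  have htransfer : ϕ.transfer (z : G) = ϕ.comp (inclusion hZH) (z ^ H.index) := by
    rw [ϕ.transfer_eq_pow _ fun k g _ => hcentral k g]
    rfl
  have hpow : z ^ H.index = 1 := by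
    apply hϕ
    rw [← htransfer, map_one, ← Abelianization.lift_apply_of,
      show Abelianization.of (z : G) = 1 from hz, map_one]
  exact (pow_eq_one_iff_left FiniteIndex.index_ne_zero).mp hpow

theorem QuotientGroup.exists_normal_finiteIndex_comap_mk'_iff {G : Type*} [Group G]
    (N : Subgroup G) [N.Normal] (P : Subgroup G → Prop) :
    (∃ Q : Subgroup (G ⧸ N), Q.Normal ∧ Q.FiniteIndex ∧ P (Q.comap (mk' N))) ↔
      ∃ H : Subgroup G, N ≤ H ∧ H.Normal ∧ H.FiniteIndex ∧ P H := by
  constructor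
  · rintro ⟨Q, hQ, hQfin, hP⟩
    refine ⟨Q.comap (mk' N), le_comap_mk' N Q, hQ.comap _, ⟨?_⟩, hP⟩
    rw [index_comap_of_surjective _ (mk'_surjective N)]
    exact hQfin.index_ne_zero
  · rintro ⟨H, hNH, hH, hHfin, hP⟩
    have hcomap : (H.map (mk' N)).comap (mk' N) = H := by
      rw [comap_map_mk', sup_eq_right.mpr hNH]
    refine ⟨H.map (mk' N), hH.map _ (mk'_surjective N), ⟨?_⟩, by rwa [hcomap]⟩
    rw [index_map_eq _ (mk'_surjective N) (by rwa [ker_mk'])]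
    exact hHfin.index_ne_zero

/-- **Remark 2.4.** Let `π` be a group with finitely generated abelianization
and `Z` a central subgroup of `π`, free abelian of finite rank `k`; put `Q = π/Z`.  The
following are equivalent: (1) the composite `Z → π → π^ab` is injective; (2) there is a
finite-index normal subgroup `Q'` of `Q` such that, for the preimage `π'` of `Q'` in `π`,
the induced central extension `1 → Z → π' → Q' → 1` splits, i.e. `Z` has a complement
in `π'`. -/
theorem homologically_injective_iff_injective_splitting
    {π : Type*} [Group π] (k : ℕ) (Z : Subgroup π)
    (hZcentral : Z ≤ Subgroup.center π)
    (hZfree : Nonempty (Z ≃* Multiplicative (Fin k → ℤ)))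
    (hfg : Group.FG (Abelianization π)) :
    letI : Z.Normal := Subgroup.normal_of_le_center' Z hZcentral
    (Function.Injective (fun z : Z => Abelianization.of (z : π)) ↔
      ∃ Q' : Subgroup (π ⧸ Z), Q'.Normal ∧ Q'.FiniteIndex ∧
        ∃ C : Subgroup π, C ≤ Q'.comap (QuotientGroup.mk' Z) ∧
          Z ⊓ C = ⊥ ∧ Z ⊔ C = Q'.comap (QuotientGroup.mk' Z)) := by
  have : Z.Normal := Subgroup.normal_of_le_center' Z hZcentral
  obtain ⟨e⟩ := hZfree
  have : IsMulTorsionFree Z := e.injective.isMulTorsionFree e.toMonoidHom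
  refine Iff.trans ?_
    (QuotientGroup.exists_normal_finiteIndex_comap_mk'_iff Z Z.HasComplementIn).symm
  constructor
  · intro hinj
    obtain ⟨n, χ, hχ, hfin⟩ := CommGroup.exists_monoidHom_injective_comp_finiteIndex_range
      (Abelianization.of.comp Z.subtype) hinj
    exact Z.exists_normal_finiteIndex_hasComplementIn_of_injective (χ.comp Abelianization.of) hχ
  · rintro ⟨H, hZH, -, hH, hcompl⟩
    obtain ⟨r, hr⟩ := hcompl.exists_retraction hZcentral hZH
    open scoped IsMulCommutative in
    refine Abelianization.of_comp_subtype_injective hZcentral hZH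
      ((inclusion hZcentral).comp r) ?_
    rw [MonoidHom.comp_assoc, hr, MonoidHom.comp_id]
    exact inclusion_injective hZcentral
end
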